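/- arXiv:1603.01649 — 4 statements merged into one kernel-verified Lean document; each statement's English description precedes it below -/
import Mathlib

section
/- Moment bound for the empirical variance of the instrument (Lemma A.1, part 2): For every m ∈ ℕ there exists a constant C > 0 depending only on m such that for all n ∈ ℕ and all (X,W) ∈ 𝓕^{4m}_{η,τ}: sup_{k∈ℤ} E|ŵ_k/w_k − 1|^{2m} ≤ C·η/n^m. -/
open MeasureTheory Complex Filter Real Set ProbabilityTheory
open scoped ENNReal NNReal Topology ComplexConjugate Classical

noncomputable section

namespace FLIR

instance : Fact ((0:ℝ) < 1) := ⟨one_pos⟩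

/-- `H = L²([0,1],ℂ)`, realized as the `L²` space of the circle of circumference `1`
with its normalized Haar (Lebesgue) measure. -/
abbrev H : Type := Lp ℂ 2 (@AddCircle.haarAddCircle 1 _)

instance : MeasurableSpace H := borel H
instance : BorelSpace H := ⟨rfl⟩

/-- The Fourier coefficient `⟨f, φ_k⟩ = ∫₀¹ f(t) e^{-2πikt} dt`. -/
def coef (f : H) (k : ℤ) : ℂ := fourierBasis.repr f k

/-- Sobolev weights `γ_k = 1 + |2πk|²`. -/
def γw (k : ℤ) : ℝ := 1 + (2 * Real.pi * (k : ℝ)) ^ 2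

/-- Squared Sobolev norm `‖f‖_ν² = ∑_k γ_k^ν |⟨f,φ_k⟩|²` (with value in `[0,∞]`). -/
def sobSq (ν : ℝ) (f : H) : ℝ≥0∞ := ∑' k : ℤ, ENNReal.ofReal (γw k ^ ν * ‖coef f k‖ ^ 2)

/-- Squared Sobolev distance between a coefficient sequence `b` and `f`. -/
def sobDiff (ν : ℝ) (b : ℤ → ℂ) (f : H) : ℝ≥0∞ :=
  ∑' k : ℤ, ENNReal.ofReal (γw k ^ ν * ‖b k - coef f k‖ ^ 2)

variable {Ω : Type} [MeasurableSpace Ω]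

/-- `x_k = E|⟨X,φ_k⟩|²`. -/
def xPop (μ : Measure Ω) (X : Ω → H) (k : ℤ) : ℝ := ∫ ω, ‖coef (X ω) k‖ ^ 2 ∂μ

/-- `w_k = E|⟨W,φ_k⟩|²`. -/
def wPop (μ : Measure Ω) (W : Ω → H) (k : ℤ) : ℝ := ∫ ω, ‖coef (W ω) k‖ ^ 2 ∂μ

/-- `c_k = E[⟨φ_k,X⟩ ⟨W,φ_k⟩]`. -/
def cPop (μ : Measure Ω) (X W : Ω → H) (k : ℤ) : ℂ :=
  ∫ ω, conj (coef (X ω) k) * coef (W ω) k ∂μ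

/-- `λ_k = |c_k|²/w_k`. -/
def lamPop (μ : Measure Ω) (X W : Ω → H) (k : ℤ) : ℝ :=
  ‖cPop μ X W k‖ ^ 2 / wPop μ W k

/-- `λ₊ = max(1, sup_k λ_k)`. -/
def lamPlus (μ : Measure Ω) (X W : Ω → H) : ℝ := max 1 (⨆ k : ℤ, lamPop μ X W k)

/-- `E‖X‖²`. -/
def EnormSq (μ : Measure Ω) (X : Ω → H) : ℝ := ∫ ω, ‖X ω‖ ^ 2 ∂μ

/-- The moment class `𝓕^m_{η,τ}`. -/
def memF (μ : Measure Ω) (X W : Ω → H) (m : ℕ) (η τ : ℝ) : Prop :=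
  1 ≤ η ∧ 1 ≤ τ ∧
  (∀ k : ℤ, ∫⁻ ω, ENNReal.ofReal (‖coef (X ω) k‖ ^ m) ∂μ
      ≤ ENNReal.ofReal (η * xPop μ X k ^ ((m : ℝ) / 2))) ∧
  (∀ k : ℤ, ∫⁻ ω, ENNReal.ofReal (‖coef (W ω) k‖ ^ m) ∂μ
      ≤ ENNReal.ofReal (η * wPop μ W k ^ ((m : ℝ) / 2))) ∧
  (∀ k : ℤ, lamPop μ X W k / wPop μ W k ≤ τ)

/-- The error class `𝓔^m_η`: centered, unit variance, `m`-th moment bounded by `η`. -/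
def memE (μ : Measure Ω) (U : Ω → ℝ) (m : ℕ) (η : ℝ) : Prop :=
  Measurable U ∧ Integrable U μ ∧ Integrable (fun ω => (U ω) ^ 2) μ ∧
  (∫ ω, U ω ∂μ) = 0 ∧ (∫ ω, (U ω) ^ 2 ∂μ) = 1 ∧
  ∫⁻ ω, ENNReal.ofReal (|U ω| ^ m) ∂μ ≤ ENNReal.ofReal η

/-- The link condition `(λ_k) ∈ 𝒮_{κ,d}`. -/
def memS (μ : Measure Ω) (X W : Ω → H) (κ : ℝ → ℝ) (d ν p : ℝ) : Prop :=
  ∀ k : ℤ,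
    κ (lamPop μ X W k / (d * γw k ^ ν * lamPlus μ X W)) ≤ γw k ^ (ν - p) ∧
    γw k ^ (ν - p) ≤ κ (d * lamPop μ X W k / (γw k ^ ν * lamPlus μ X W))

/-- An index function: continuous, strictly increasing, positive, vanishing at `0⁺`. -/
def IndexFun (κ : ℝ → ℝ) : Prop :=
  StrictMonoOn κ (Set.Ioi 0) ∧ ContinuousOn κ (Set.Ioi 0) ∧
  (∀ t : ℝ, 0 < t → 0 < κ t) ∧
  Filter.Tendsto κ (nhdsWithin 0 (Set.Ioi 0)) (nhds 0)

/-- Structural assumptions of the model: measurability, second moments, centeredness,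
the regression equation `Y = ∫ βX + σU`, exogeneity of `W`, joint second order
stationarity (in the form of uncorrelated distinct Fourier coefficients) and
nondegeneracy `c_k ≠ 0`. -/
def Model (μ : Measure Ω) (Y : Ω → ℝ) (X W : Ω → H) (U : Ω → ℝ) (β : H) (σ : ℝ) : Prop :=
  Measurable Y ∧ Measurable X ∧ Measurable W ∧ Measurable U ∧
  Integrable (fun ω => ‖X ω‖ ^ 2) μ ∧ Integrable (fun ω => ‖W ω‖ ^ 2) μ ∧
  (∫ ω, X ω ∂μ) = 0 ∧ (∫ ω, W ω ∂μ) = 0 ∧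
  (∀ᵐ ω ∂μ, (Y ω : ℂ) =
      (∫ t : AddCircle (1:ℝ), β t * (X ω) t ∂(@AddCircle.haarAddCircle 1 _)) + σ * U ω) ∧
  (∀ k : ℤ, (∫ ω, (U ω : ℂ) * coef (W ω) k ∂μ) = 0) ∧
  (∀ j k : ℤ, j ≠ k → (∫ ω, conj (coef (X ω) j) * coef (W ω) k ∂μ) = 0) ∧
  (∀ k : ℤ, cPop μ X W k ≠ 0)

/-- Structural assumptions on the pair `(X,W)` alone. -/
def PairModel (μ : Measure Ω) (X W : Ω → H) : Prop :=
  Measurable X ∧ Measurable W ∧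
  Integrable (fun ω => ‖X ω‖ ^ 2) μ ∧ Integrable (fun ω => ‖W ω‖ ^ 2) μ ∧
  (∫ ω, X ω ∂μ) = 0 ∧ (∫ ω, W ω ∂μ) = 0 ∧
  (∀ j k : ℤ, j ≠ k → (∫ ω, conj (coef (X ω) j) * coef (W ω) k ∂μ) = 0) ∧
  (∀ k : ℤ, cPop μ X W k ≠ 0)

/-- The sample `(Y_i,X_i,W_i)` is i.i.d. with common distribution that of `(Y₀,X₀,W₀)`. -/
def IIDSample (μ : Measure Ω) (n : ℕ) (Y : Fin n → Ω → ℝ) (X W : Fin n → Ω → H)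
    (Y0 : Ω → ℝ) (X0 W0 : Ω → H) : Prop :=
  (∀ i, Measurable (Y i)) ∧ (∀ i, Measurable (X i)) ∧ (∀ i, Measurable (W i)) ∧
  iIndepFun (fun i ω => (Y i ω, X i ω, W i ω)) μ ∧
  (∀ i, Measure.map (fun ω => (Y i ω, X i ω, W i ω)) μ
      = Measure.map (fun ω => (Y0 ω, X0 ω, W0 ω)) μ)

/-- The sample `(X_i,W_i)` is i.i.d. with common distribution that of `(X₀,W₀)`. -/
def IIDSampleXW (μ : Measure Ω) (n : ℕ) (X W : Fin n → Ω → H) (X0 W0 : Ω → H) : Prop :=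
  (∀ i, Measurable (X i)) ∧ (∀ i, Measurable (W i)) ∧
  iIndepFun (fun i ω => (X i ω, W i ω)) μ ∧
  (∀ i, Measure.map (fun ω => (X i ω, W i ω)) μ = Measure.map (fun ω => (X0 ω, W0 ω)) μ)

/-- `ĉ_k = n⁻¹ ∑ᵢ ⟨φ_k,X_i⟩⟨W_i,φ_k⟩`. -/
def cHat (n : ℕ) (X W : Fin n → Ω → H) (k : ℤ) (ω : Ω) : ℂ :=
  (n : ℂ)⁻¹ * ∑ i, conj (coef (X i ω) k) * coef (W i ω) k

/-- `ŵ_k = n⁻¹ ∑ᵢ |⟨W_i,φ_k⟩|²`. -/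
def wHat (n : ℕ) (W : Fin n → Ω → H) (k : ℤ) (ω : Ω) : ℝ :=
  (n : ℝ)⁻¹ * ∑ i, ‖coef (W i ω) k‖ ^ 2

/-- `λ̂_k = (|ĉ_k|²/ŵ_k)·1{ŵ_k ≥ α}`. -/
def lamHat (α : ℝ) (n : ℕ) (X W : Fin n → Ω → H) (k : ℤ) (ω : Ω) : ℝ :=
  if α ≤ wHat n W k ω then ‖cHat n X W k ω‖ ^ 2 / wHat n W k ω else 0

/-- `ĝ_k = (conj ĉ_k / ŵ_k)·1{ŵ_k ≥ α}· n⁻¹ ∑ᵢ Y_i ⟨W_i,φ_k⟩`. -/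
def gHat (α : ℝ) (n : ℕ) (Y : Fin n → Ω → ℝ) (X W : Fin n → Ω → H) (k : ℤ) (ω : Ω) : ℂ :=
  (if α ≤ wHat n W k ω then conj (cHat n X W k ω) / (wHat n W k ω : ℂ) else 0) *
    ((n : ℂ)⁻¹ * ∑ i, (Y i ω : ℂ) * coef (W i ω) k)

/-- Fourier coefficients of the estimator `β̂_ν`. -/
def bHat (ν α : ℝ) (n : ℕ) (Y : Fin n → Ω → ℝ) (X W : Fin n → Ω → H) (k : ℤ) (ω : Ω) : ℂ :=
  if α * γw k ^ ν ≤ lamHat α n X W k ω then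
    gHat α n Y X W k ω / (lamHat α n X W k ω : ℂ) else 0

/-- The residual process `T_{n,k} = n⁻¹ ∑ᵢ Y_i ⟨W_i,φ_k⟩ − β_k ĉ_k`. -/
def Tnk (n : ℕ) (Y : Fin n → Ω → ℝ) (X W : Fin n → Ω → H) (β : H) (k : ℤ) (ω : Ω) : ℂ :=
  (n : ℂ)⁻¹ * ∑ i, (Y i ω : ℂ) * coef (W i ω) k - coef β k * cHat n X W k ω

/-- The `𝒲_ν`-risk `E‖β̂_ν − β‖_ν²` of the estimator. -/
def risk (μ : Measure Ω) (ν α : ℝ) (n : ℕ) (Y : Fin n → Ω → ℝ) (X W : Fin n → Ω → H)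
    (β : H) : ℝ≥0∞ :=
  ∫⁻ ω, sobDiff ν (fun k => bHat ν α n Y X W k ω) β ∂μ

end FLIR

/-!
Put `Z_i = |⟨W_i, φ_k⟩|² / w_k - 1`, so that `ŵ_k / w_k - 1 = n⁻¹ ∑ Z_i` with `Z_i` i.i.d.,
centred, and `E |Z_i|^(2m) ≤ 2η` by the `4m`-th moment condition of `𝓕`. Expanding
`(∑ Z_i)^(2m)` as a sum over maps `f : Fin (2m) → Fin n`, independence factorizes each term,
which therefore vanishes as soon as some index is hit exactly once. The surviving maps take at
most `m` values, so there are at most `m^(2m) n^m` of them, and by Hölder each term is at most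
`2η`.
-/

open Finset

section Counting

variable {α β : Type*} [Fintype α] [DecidableEq β]

theorem card_filter_card_image_le [DecidableEq α] [Fintype β] [Nonempty β] (m : ℕ) :
    #{f : α → β | #(Finset.univ.image f) ≤ m} ≤ m ^ Fintype.card α * Fintype.card β ^ m := by
  -- a map with at most `m` values factors through `Fin m`
  calc #{f : α → β | #(Finset.univ.image f) ≤ m}
      ≤ #(Finset.univ.image fun p : (α → Fin m) × (Fin m → β) => p.2 ∘ p.1) := by
        refine card_le_card fun f hf => ?_
        obtain ⟨e⟩ : Nonempty (Finset.univ.image f ↪ Fin m) :=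
          Function.Embedding.nonempty_of_card_le <| by
            rw [Fintype.card_coe, Fintype.card_fin]; exact (mem_filter.1 hf).2
        refine mem_image.2 ⟨(fun a => e ⟨f a, mem_image_of_mem f (mem_univ a)⟩,
          Function.extend e Subtype.val fun _ => Classical.arbitrary β), mem_univ _, ?_⟩
        exact funext fun a => e.injective.extend_apply Subtype.val (fun _ => Classical.arbitrary β)
          ⟨f a, mem_image_of_mem f (mem_univ a)⟩
    _ ≤ Fintype.card ((α → Fin m) × (Fin m → β)) := card_image_le
    _ = m ^ Fintype.card α * Fintype.card β ^ m := by simp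

theorem card_image_le_of_card_fiber_ne_one {m : ℕ} (hα : Fintype.card α = 2 * m) {f : α → β}
    (hf : ∀ b, #{a | f a = b} ≠ 1) : #(Finset.univ.image f) ≤ m := by
  have h := mul_card_image_le_card (f := f) Finset.univ 2 fun b hb => by
    obtain ⟨a, -, rfl⟩ := mem_image.1 hb
    have : 0 < #{a' | f a' = f a} := card_pos.2 ⟨a, by simp⟩
    have := hf (f a)
    omega
  rw [card_univ, hα] at h
  omega

theorem card_filter_card_fiber_ne_one_le [DecidableEq α] [Fintype β] [Nonempty β] {m : ℕ}
    (hα : Fintype.card α = 2 * m) :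
    #{f : α → β | ∀ b, #{a | f a = b} ≠ 1} ≤ m ^ (2 * m) * Fintype.card β ^ m := by
  rw [← hα]
  refine (card_le_card fun f => ?_).trans (card_filter_card_image_le m)
  simp only [mem_filter, Finset.mem_univ, true_and]
  exact card_image_le_of_card_fiber_ne_one hα

end Counting

section Moments

variable {Ω ι : Type*} [MeasurableSpace Ω] {μ : Measure Ω} [Fintype ι]

theorem lintegral_abs_prod_le [Nonempty ι] {F : ι → Ω → ℝ} (hF : ∀ i, AEMeasurable (F i) μ)
    {M : ℝ≥0∞} (hM : ∀ i, ∫⁻ ω, ENNReal.ofReal (|F i ω| ^ Fintype.card ι) ∂μ ≤ M) :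
    ∫⁻ ω, ENNReal.ofReal |∏ i, F i ω| ∂μ ≤ M := by
  set N := Fintype.card ι
  have hN : (N : ℝ) ≠ 0 := Nat.cast_ne_zero.2 Fintype.card_ne_zero
  have hroot : ∀ x : ℝ, ENNReal.ofReal (|x| ^ N) ^ (N : ℝ)⁻¹ = ENNReal.ofReal |x| := fun x => by
    rw [ENNReal.ofReal_pow (abs_nonneg x), ← ENNReal.rpow_natCast, ← ENNReal.rpow_mul,
      mul_inv_cancel₀ hN, ENNReal.rpow_one]
  calc ∫⁻ ω, ENNReal.ofReal |∏ i, F i ω| ∂μ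
      = ∫⁻ ω, ∏ i, ENNReal.ofReal (|F i ω| ^ N) ^ (N : ℝ)⁻¹ ∂μ := by
        simp_rw [hroot, abs_prod, ENNReal.ofReal_prod_of_nonneg fun i _ => abs_nonneg (F i _)]
    _ ≤ ∏ i, (∫⁻ ω, ENNReal.ofReal (|F i ω| ^ N) ∂μ) ^ (N : ℝ)⁻¹ :=
        ENNReal.lintegral_prod_norm_pow_le _ (fun i _ => ((hF i).abs.pow_const N).ennreal_ofReal)
          (by simp [N, hN]) fun _ _ => by positivity
    _ ≤ ∏ _i : ι, M ^ (N : ℝ)⁻¹ := by gcongr with i; exact hM i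
    _ = M := by
        rw [prod_const, card_univ, ← ENNReal.rpow_natCast, ← ENNReal.rpow_mul,
          inv_mul_cancel₀ hN, ENNReal.rpow_one]

theorem integrable_prod_and_abs_integral_le [Nonempty ι] {F : ι → Ω → ℝ}
    (hF : ∀ i, Measurable (F i)) {M : ℝ≥0}
    (hM : ∀ i, ∫⁻ ω, ENNReal.ofReal (|F i ω| ^ Fintype.card ι) ∂μ ≤ M) :
    Integrable (fun ω => ∏ i, F i ω) μ ∧ |∫ ω, ∏ i, F i ω ∂μ| ≤ M := by
  have h := lintegral_abs_prod_le (fun i => (hF i).aemeasurable) hM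
  refine ⟨⟨(Finset.measurable_prod _ fun i _ => hF i).aestronglyMeasurable, ?_⟩, ?_⟩
  · simp_rw [HasFiniteIntegral, Real.enorm_eq_ofReal_abs]
    exact h.trans_lt ENNReal.coe_lt_top
  · refine (norm_integral_le_lintegral_norm (fun ω => ∏ i, F i ω)).trans
      (ENNReal.toReal_le_of_le_ofReal M.2 ?_)
    simpa only [Real.norm_eq_abs, ENNReal.ofReal_coe_nnreal] using h

theorem integral_prod_comp_eq_prod_integral_pow {α : Type*} [Fintype α] [DecidableEq ι]
    {Z : ι → Ω → ℝ} (hindep : iIndepFun Z μ) (hmeas : ∀ i, Measurable (Z i)) (f : α → ι) :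
    ∫ ω, ∏ a, Z (f a) ω ∂μ = ∏ i, ∫ ω, Z i ω ^ #{a | f a = i} ∂μ := by
  have hfiber : ∀ ω, ∏ a, Z (f a) ω = ∏ i, Z i ω ^ #{a | f a = i} := fun ω => by
    rw [← prod_fiberwise' Finset.univ f fun i => Z i ω]
    simp only [prod_const]
  simp_rw [hfiber]
  exact hindep.integral_fun_prod_comp (fun i => (hmeas i).aemeasurable)
    fun i => (continuous_pow _).aestronglyMeasurable

theorem lintegral_abs_sum_pow_le_of_iIndepFun [Nonempty ι] {Z : ι → Ω → ℝ} {m : ℕ} (hm : 1 ≤ m)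
    {M : ℝ≥0} (hindep : iIndepFun Z μ) (hmeas : ∀ i, Measurable (Z i))
    (hmean : ∀ i, ∫ ω, Z i ω ∂μ = 0)
    (hmom : ∀ i, ∫⁻ ω, ENNReal.ofReal (|Z i ω| ^ (2 * m)) ∂μ ≤ M) :
    ∫⁻ ω, ENNReal.ofReal (|∑ i, Z i ω| ^ (2 * m)) ∂μ ≤
      ENNReal.ofReal (m ^ (2 * m) * Fintype.card ι ^ m * M) := by
  have : Nonempty (Fin (2 * m)) := ⟨⟨0, by omega⟩⟩
  let T : (Fin (2 * m) → ι) → ℝ := fun f => ∫ ω, ∏ a, Z (f a) ω ∂μ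
  have hT : ∀ f, Integrable (fun ω => ∏ a, Z (f a) ω) μ ∧ |T f| ≤ M := fun f =>
    integrable_prod_and_abs_integral_le (fun a => hmeas (f a)) (by simpa using fun a => hmom (f a))
  -- a factor occurring exactly once contributes its mean, which is zero
  have hT_zero : ∀ f, (∃ i, #{a | f a = i} = 1) → T f = 0 := by
    rintro f ⟨i, hi⟩
    simp only [T, integral_prod_comp_eq_prod_integral_pow hindep hmeas]
    exact prod_eq_zero (Finset.mem_univ i) (by simpa [hi] using hmean i)
  have hexpand : ∀ ω, |∑ i, Z i ω| ^ (2 * m) = ∑ f : Fin (2 * m) → ι, ∏ a, Z (f a) ω :=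
    fun ω => by rw [(even_two_mul m).pow_abs, Fintype.sum_pow]
  have hint : Integrable (fun ω => |∑ i, Z i ω| ^ (2 * m)) μ := by
    simp_rw [hexpand]
    exact integrable_finsetSum _ fun f _ => (hT f).1
  rw [← ofReal_integral_eq_lintegral_ofReal hint (ae_of_all _ fun ω => by positivity)]
  refine ENNReal.ofReal_le_ofReal ?_
  calc ∫ ω, |∑ i, Z i ω| ^ (2 * m) ∂μ = ∑ f, T f := by
        simp_rw [hexpand]
        exact integral_finsetSum _ fun f _ => (hT f).1
    _ = ∑ f : Fin (2 * m) → ι with ∀ i, #{a | f a = i} ≠ 1, T f :=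
        (sum_filter_of_ne fun f _ hf => by contrapose! hf; exact hT_zero f hf).symm
    _ ≤ ∑ f : Fin (2 * m) → ι with ∀ i, #{a | f a = i} ≠ 1, (M : ℝ) :=
        sum_le_sum fun f _ => (le_abs_self _).trans (hT f).2
    _ ≤ m ^ (2 * m) * Fintype.card ι ^ m * M := by
        rw [sum_const, nsmul_eq_mul]
        gcongr
        exact_mod_cast card_filter_card_fiber_ne_one_le (Fintype.card_fin _)

end Moments

namespace FLIR

theorem norm_coef_le (f : H) (k : ℤ) : ‖coef f k‖ ≤ ‖f‖ := by
  rw [coef, fourierBasis.repr_apply_apply]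
  exact (norm_inner_le_norm _ _).trans_eq (by rw [fourierBasis.orthonormal.1 k, one_mul])

theorem continuous_coef (k : ℤ) : Continuous fun f : H => coef f k := by
  simp_rw [coef, fourierBasis.repr_apply_apply]
  exact continuous_const.inner continuous_id

theorem wHat_div_sub_one {Ω : Type} {n : ℕ} (hn : n ≠ 0) (W : Fin n → Ω → H) (k : ℤ) (ω : Ω)
    (w : ℝ) :
    wHat n W k ω / w - 1 = (n : ℝ)⁻¹ * ∑ i, (‖coef (W i ω) k‖ ^ 2 / w - 1) := by
  rw [wHat, sum_sub_distrib, ← sum_div, sum_const, card_univ, Fintype.card_fin, nsmul_eq_mul]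
  field_simp

variable {Ω : Type} [MeasurableSpace Ω] {μ : Measure Ω}

theorem integrable_norm_coef_sq {W : Ω → H} (hW : Measurable W)
    (hW2 : Integrable (fun ω => ‖W ω‖ ^ 2) μ) (k : ℤ) :
    Integrable (fun ω => ‖coef (W ω) k‖ ^ 2) μ :=
  hW2.mono' (((continuous_coef k).measurable.comp hW).norm.pow_const 2).aestronglyMeasurable
    (ae_of_all _ fun ω => by
      simpa using pow_le_pow_left₀ (norm_nonneg _) (norm_coef_le (W ω) k) 2)

theorem wPop_pos {X W : Ω → H} {k : ℤ} (hW : Measurable W)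
    (hW2 : Integrable (fun ω => ‖W ω‖ ^ 2) μ) (hc : cPop μ X W k ≠ 0) : 0 < wPop μ W k := by
  refine (integral_nonneg fun ω => by positivity).lt_of_ne fun h => hc ?_
  have hzero : (fun ω => ‖coef (W ω) k‖ ^ 2) =ᵐ[μ] 0 :=
    (integral_eq_zero_iff_of_nonneg (fun ω => by positivity)
      (integrable_norm_coef_sq hW hW2 k)).1 h.symm
  rw [cPop, integral_eq_zero_of_ae]
  filter_upwards [hzero] with ω hω
  rw [Pi.zero_apply, sq_eq_zero_iff, norm_eq_zero] at hω
  rw [hω, mul_zero, Pi.zero_apply]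

theorem integral_norm_coef_sq_div_sub_one {W : Ω → H} [IsProbabilityMeasure μ] (hW : Measurable W)
    (hW2 : Integrable (fun ω => ‖W ω‖ ^ 2) μ) {k : ℤ} (hw : wPop μ W k ≠ 0) :
    ∫ ω, (‖coef (W ω) k‖ ^ 2 / wPop μ W k - 1) ∂μ = 0 := by
  rw [integral_sub ((integrable_norm_coef_sq hW hW2 k).div_const _) (integrable_const 1),
    integral_div, ← wPop, div_self hw]
  simp

theorem lintegral_abs_sub_one_pow_le [IsProbabilityMeasure μ] {V : Ω → ℝ} (hV0 : ∀ ω, 0 ≤ V ω)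
    (N : ℕ) :
    ∫⁻ ω, ENNReal.ofReal (|V ω - 1| ^ N) ∂μ ≤ ∫⁻ ω, ENNReal.ofReal (V ω ^ N) ∂μ + 1 := by
  have hpt : ∀ ω, |V ω - 1| ^ N ≤ V ω ^ N + 1 := fun ω => by
    rcases le_total (V ω) 1 with h | h
    · have : |V ω - 1| ^ N ≤ 1 :=
        pow_le_one₀ (abs_nonneg _) (by rw [abs_sub_comm, abs_of_nonneg] <;> linarith [hV0 ω])
      linarith [pow_nonneg (hV0 ω) N]
    · have : |V ω - 1| ^ N ≤ V ω ^ N :=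
        pow_le_pow_left₀ (abs_nonneg _) (by rw [abs_of_nonneg] <;> linarith) N
      linarith
  calc ∫⁻ ω, ENNReal.ofReal (|V ω - 1| ^ N) ∂μ
      ≤ ∫⁻ ω, (ENNReal.ofReal (V ω ^ N) + 1) ∂μ := lintegral_mono fun ω => by
        rw [← ENNReal.ofReal_one, ← ENNReal.ofReal_add (pow_nonneg (hV0 ω) N) zero_le_one]
        exact ENNReal.ofReal_le_ofReal (hpt ω)
    _ = ∫⁻ ω, ENNReal.ofReal (V ω ^ N) ∂μ + 1 := by
        rw [lintegral_add_right _ measurable_const]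
        simp

theorem lintegral_norm_coef_sq_div_pow_le {W : Ω → H} {k : ℤ} {m : ℕ} {η : ℝ}
    (hw : 0 < wPop μ W k)
    (hmom : ∫⁻ ω, ENNReal.ofReal (‖coef (W ω) k‖ ^ (4 * m)) ∂μ
      ≤ ENNReal.ofReal (η * wPop μ W k ^ (((4 * m : ℕ) : ℝ) / 2))) :
    ∫⁻ ω, ENNReal.ofReal ((‖coef (W ω) k‖ ^ 2 / wPop μ W k) ^ (2 * m)) ∂μ ≤ ENNReal.ofReal η := by
  set w := wPop μ W k
  have hexp : (((4 * m : ℕ) : ℝ) / 2) = ((2 * m : ℕ) : ℝ) := by push_cast; ring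
  rw [hexp, Real.rpow_natCast] at hmom
  calc ∫⁻ ω, ENNReal.ofReal ((‖coef (W ω) k‖ ^ 2 / w) ^ (2 * m)) ∂μ
      = (∫⁻ ω, ENNReal.ofReal (‖coef (W ω) k‖ ^ (4 * m)) ∂μ) *
          ENNReal.ofReal (w ^ (2 * m))⁻¹ := by
        rw [← lintegral_mul_const' _ _ ENNReal.ofReal_ne_top]
        congr 1 with ω
        rw [← ENNReal.ofReal_mul (by positivity), div_pow, ← pow_mul, div_eq_mul_inv]
        ring_nf
    _ ≤ ENNReal.ofReal (η * w ^ (2 * m)) * ENNReal.ofReal (w ^ (2 * m))⁻¹ := by gcongr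
    _ = ENNReal.ofReal η := by
        rw [← ENNReal.ofReal_mul' (inv_nonneg.2 (pow_nonneg hw.le _)),
          mul_inv_cancel_right₀ (pow_pos hw _).ne']

theorem IIDSampleXW.iIndepFun_comp {n : ℕ} {X W : Fin n → Ω → H} {X0 W0 : Ω → H}
    (h : IIDSampleXW μ n X W X0 W0) {g : H → ℝ} (hg : Measurable g) :
    iIndepFun (fun i ω => g (W i ω)) μ :=
  h.2.2.1.comp (fun _ p => g p.2) fun _ => hg.comp measurable_snd

theorem IIDSampleXW.identDistrib_comp {n : ℕ} {X W : Fin n → Ω → H} {X0 W0 : Ω → H}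
    (h : IIDSampleXW μ n X W X0 W0) (hX0 : Measurable X0) (hW0 : Measurable W0) {g : H → ℝ}
    (hg : Measurable g) (i : Fin n) :
    IdentDistrib (fun ω => g (W i ω)) (fun ω => g (W0 ω)) μ μ :=
  have hpair : IdentDistrib (fun ω => (X i ω, W i ω)) (fun ω => (X0 ω, W0 ω)) μ μ :=
    ⟨((h.1 i).prodMk (h.2.1 i)).aemeasurable, (hX0.prodMk hW0).aemeasurable, h.2.2.2 i⟩
  hpair.comp (hg.comp measurable_snd)

theorem lintegral_ofReal_abs_const_mul_pow (c : ℝ) (S : Ω → ℝ) (N : ℕ) :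
    ∫⁻ ω, ENNReal.ofReal (|c * S ω| ^ N) ∂μ =
      ENNReal.ofReal (|c| ^ N) * ∫⁻ ω, ENNReal.ofReal (|S ω| ^ N) ∂μ := by
  rw [← lintegral_const_mul' _ _ ENNReal.ofReal_ne_top]
  simp_rw [abs_mul, mul_pow, ENNReal.ofReal_mul (pow_nonneg (abs_nonneg c) N)]

theorem lintegral_abs_norm_coef_sq_div_sub_one_pow_le [IsProbabilityMeasure μ] {W : Ω → H}
    {k : ℤ} {m : ℕ} {η : ℝ} (hη : 1 ≤ η) (hw : 0 < wPop μ W k)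
    (hmom : ∫⁻ ω, ENNReal.ofReal (‖coef (W ω) k‖ ^ (4 * m)) ∂μ
      ≤ ENNReal.ofReal (η * wPop μ W k ^ (((4 * m : ℕ) : ℝ) / 2))) :
    ∫⁻ ω, ENNReal.ofReal (|‖coef (W ω) k‖ ^ 2 / wPop μ W k - 1| ^ (2 * m)) ∂μ
      ≤ ENNReal.ofReal (2 * η) :=
  calc _ ≤ ∫⁻ ω, ENNReal.ofReal ((‖coef (W ω) k‖ ^ 2 / wPop μ W k) ^ (2 * m)) ∂μ + 1 :=
        lintegral_abs_sub_one_pow_le (fun ω => by positivity) _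
    _ ≤ ENNReal.ofReal η + ENNReal.ofReal η := by
        gcongr
        · exact lintegral_norm_coef_sq_div_pow_le hw hmom
        · exact ENNReal.one_le_ofReal.2 hη
    _ = ENNReal.ofReal (2 * η) := by rw [← ENNReal.ofReal_add (by linarith) (by linarith), two_mul]

/-- Moment bound for the empirical variance of the instrument
(Lemma A.1, part 2). -/
theorem lemA1_part2 (m : ℕ) (hm : 1 ≤ m) :
    ∃ C : ℝ, 0 < C ∧
      ∀ (Ω : Type) [MeasurableSpace Ω] (μ : Measure Ω) [IsProbabilityMeasure μ]
        (n : ℕ) (X W : Fin n → Ω → H) (X0 W0 : Ω → H) (η τ : ℝ),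
        0 < n →
        PairModel μ X0 W0 →
        IIDSampleXW μ n X W X0 W0 →
        memF μ X0 W0 (4 * m) η τ →
        ∀ k : ℤ,
          ∫⁻ ω, ENNReal.ofReal (|wHat n W k ω / wPop μ W0 k - 1| ^ (2 * m)) ∂μ ≤
            ENNReal.ofReal (C * η / (n : ℝ) ^ m) := by
  refine ⟨2 * m ^ (2 * m), by positivity, ?_⟩
  intro Ω _ μ _ n X W X0 W0 η τ hn hpair hiid hF k
  obtain ⟨hX0, hW0, -, hW0sq, -, -, -, hc⟩ := hpair
  obtain ⟨hη, -, -, hFW, -⟩ := hF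
  have : Nonempty (Fin n) := ⟨⟨0, hn⟩⟩
  have hw := wPop_pos hW0 hW0sq (hc k)
  set w := wPop μ W0 k
  set g : H → ℝ := fun f => ‖coef f k‖ ^ 2 / w - 1
  have hg : Measurable g :=
    (((continuous_coef k).measurable.norm.pow_const 2).div_const w).sub_const 1
  have hZ := hiid.identDistrib_comp hX0 hW0 hg
  have hsum := lintegral_abs_sum_pow_le_of_iIndepFun (M := (2 * η).toNNReal) hm
    (hiid.iIndepFun_comp hg) (fun i => hg.comp (hiid.2.1 i))
    (fun i => (hZ i).integral_eq.trans (integral_norm_coef_sq_div_sub_one hW0 hW0sq hw.ne'))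
    (fun i => ((hZ i).comp (measurable_id.abs.pow_const _).ennreal_ofReal).lintegral_eq ▸
      lintegral_abs_norm_coef_sq_div_sub_one_pow_le hη hw (hFW k))
  rw [Fintype.card_fin, Real.coe_toNNReal _ (by linarith)] at hsum
  simp_rw [wHat_div_sub_one hn.ne', lintegral_ofReal_abs_const_mul_pow]
  calc _ ≤ ENNReal.ofReal (|(n : ℝ)⁻¹| ^ (2 * m)) *
        ENNReal.ofReal (m ^ (2 * m) * n ^ m * (2 * η)) := by gcongr
    _ = ENNReal.ofReal (2 * m ^ (2 * m) * η / n ^ m) := by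
        rw [abs_inv, Nat.abs_cast, inv_pow, ← ENNReal.ofReal_mul (by positivity)]
        congr 1
        field_simp
        ring

end FLIR
end
end

section
/- Deterministic sequence lemma for the lower bound (Lemma A.4): Let (λ_k)_{k∈ℤ} ∈ 𝒮_{κ,d} with λ₊ := max(1, sup_k λ_k), let k* ∈ ℕ and δ* := φ(γ_{k*}^{ν−p}) ∈ (0,1] satisfy Δ⁻¹ ≤ Σ_{|k|≤k*} γ_{k*}^{p−ν}/(n·φ(γ_k^{ν−p})) ≤ Δ for some Δ ≥ 1 and n ∈ ℕ. Let σ, ρ > 0, ζ := min{2σ², ρ/(d·Δ)} and b_k² := ζ/(n·λ_k) for k ∈ ℤ. Then: (i) n·b_k²·λ_k/(2σ²) ≤ 1 for all k ∈ ℤ; (ii) Σ_{|k|≤k*} b_k²·γ_k^p ≤ ρ; (iii) Σ_{|k|≤k*} b_k²·γ_k^ν ≥ min{2σ²/(d·Δ), ρ/(d·Δ)²}·κ(δ*)/λ₊. -/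
open MeasureTheory Complex Filter Real Set ProbabilityTheory
open scoped ENNReal NNReal Topology ComplexConjugate Classical

noncomputable section

namespace FLIR

variable {Ω : Type} [MeasurableSpace Ω]

/-!
Write `φ_k := φ(γ_k^{ν-p})`. Since `κ` is strictly increasing, the two sides of the link
condition invert to `γ_k^ν λ₊ φ_k ≤ d λ_k` and `λ_k ≤ d γ_k^ν λ₊ φ_k`. With `b_k² = ζ/(nλ_k)`,
the first bounds `b_k² γ_k^p` termwise by `ζ d γ_{k*}^{p-ν}/(n φ_k)` (as `γ_k ≤ γ_{k*}` for
`|k| ≤ k*`), and the second bounds `b_k² γ_k^ν` from below by `ζ/(d λ₊ n φ_k)`; summing over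
`|k| ≤ k*` and using the two-sided bound by `Δ` gives (ii) and (iii).
-/

theorem mul_le_of_map_le_map_div {κ : ℝ → ℝ} (hκ : StrictMonoOn κ (Ioi 0)) {x a s : ℝ}
    (hx : 0 < x) (ha : 0 < a) (hs : 0 < s) (h : κ s ≤ κ (x / a)) : a * s ≤ x :=
  (le_div_iff₀' ha).1 ((hκ.le_iff_le hs (div_pos hx ha)).1 h)

theorem le_mul_of_map_div_le_map {κ : ℝ → ℝ} (hκ : StrictMonoOn κ (Ioi 0)) {x a s : ℝ}
    (hx : 0 < x) (ha : 0 < a) (hs : 0 < s) (h : κ (x / a) ≤ κ s) : x ≤ a * s :=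
  (div_le_iff₀' ha).1 ((hκ.le_iff_le (div_pos hx ha) hs).1 h)

theorem one_le_γw (k : ℤ) : 1 ≤ γw k :=
  le_add_of_nonneg_right (sq_nonneg _)

theorem γw_pos (k : ℤ) : 0 < γw k :=
  one_pos.trans_le (one_le_γw k)

theorem γw_rpow_mem_Ioc (k : ℤ) {s : ℝ} (hs : s ≤ 0) : γw k ^ s ∈ Ioc 0 1 :=
  ⟨rpow_pos_of_pos (γw_pos k) s, rpow_le_one_of_one_le_of_nonpos (one_le_γw k) hs⟩

theorem γw_le_of_mem_Icc {k m : ℤ} (hk : k ∈ Finset.Icc (-m) m) : γw k ≤ γw m := by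
  rw [Finset.mem_Icc] at hk
  have hsq : (k : ℝ) ^ 2 ≤ (m : ℝ) ^ 2 :=
    sq_le_sq' (by exact_mod_cast hk.1) (by exact_mod_cast hk.2)
  unfold γw
  rw [mul_pow, mul_pow (2 * π)]
  gcongr

theorem link_inversion {p ν d L lam : ℝ} {κ φi : ℝ → ℝ} {k : ℤ} (hνp : ν < p) (hd : 0 < d)
    (hL : 0 < L) (hκ : StrictMonoOn κ (Ioi 0))
    (hφ : ∀ t ∈ Ioc (0 : ℝ) 1, φi t ∈ Ioc (0 : ℝ) 1 ∧ κ (φi t) = t) (hlam : 0 < lam)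
    (hS : κ (lam / (d * γw k ^ ν * L)) ≤ γw k ^ (ν - p) ∧
      γw k ^ (ν - p) ≤ κ (d * lam / (γw k ^ ν * L))) :
    0 < φi (γw k ^ (ν - p)) ∧ γw k ^ ν * L * φi (γw k ^ (ν - p)) ≤ d * lam ∧
      lam ≤ d * γw k ^ ν * L * φi (γw k ^ (ν - p)) := by
  obtain ⟨⟨hφ0, -⟩, hκφ⟩ := hφ _ (γw_rpow_mem_Ioc k (sub_nonpos.2 hνp.le))
  have := rpow_pos_of_pos (γw_pos k) ν
  exact ⟨hφ0, mul_le_of_map_le_map_div hκ (by positivity) (by positivity) hφ0 (hκφ.trans_le hS.2),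
    le_mul_of_map_div_le_map hκ hlam (by positivity) hφ0 (hS.1.trans_eq hκφ.symm)⟩

section WeightedSums

variable {ι : Type*} {s : Finset ι} {lam g φ : ι → ℝ} {ζ n d L H Δ : ℝ}

theorem sum_div_mul_mul_le {h : ι → ℝ} (hζ : 0 ≤ ζ) (hn : 0 < n) (hd : 0 ≤ d) (hL : 1 ≤ L)
    (hlam : ∀ k ∈ s, 0 < lam k) (hg : ∀ k ∈ s, 0 ≤ g k) (hφ : ∀ k ∈ s, 0 < φ k)
    (hh : ∀ k ∈ s, 0 ≤ h k ∧ h k ≤ H) (hlink : ∀ k ∈ s, g k * L * φ k ≤ d * lam k)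
    (hΔ : ∑ k ∈ s, H / (n * φ k) ≤ Δ) :
    ∑ k ∈ s, ζ / (n * lam k) * (g k * h k) ≤ ζ * d * Δ := by
  have hterm : ∀ k ∈ s, ζ / (n * lam k) * (g k * h k) ≤ ζ * d * (H / (n * φ k)) := by
    intro k hk
    obtain ⟨hh0, hhH⟩ := hh k hk
    have hgφ : g k * φ k ≤ d * lam k :=
      le_trans (mul_le_mul_of_nonneg_right (le_mul_of_one_le_right (hg k hk) hL) (hφ k hk).le)
        (hlink k hk)
    have := hlam k hk
    have := hφ k hk
    rw [div_mul_eq_mul_div, mul_div_assoc', div_le_div_iff₀ (by positivity) (by positivity)]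
    calc ζ * (g k * h k) * (n * φ k) = ζ * n * h k * (g k * φ k) := by ring
      _ ≤ ζ * n * h k * (d * lam k) := by gcongr
      _ ≤ ζ * n * H * (d * lam k) := by gcongr
      _ = ζ * d * H * (n * lam k) := by ring
  calc ∑ k ∈ s, ζ / (n * lam k) * (g k * h k)
      ≤ ∑ k ∈ s, ζ * d * (H / (n * φ k)) := Finset.sum_le_sum hterm
    _ = ζ * d * ∑ k ∈ s, H / (n * φ k) := (Finset.mul_sum _ _ _).symm
    _ ≤ ζ * d * Δ := by gcongr

theorem le_sum_div_mul (hζ : 0 ≤ ζ) (hn : 0 < n) (hd : 0 < d) (hL : 0 < L) (hH : 0 < H)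
    (hlam : ∀ k ∈ s, 0 < lam k) (hφ : ∀ k ∈ s, 0 < φ k)
    (hlink : ∀ k ∈ s, lam k ≤ d * g k * L * φ k) (hΔ : Δ⁻¹ ≤ ∑ k ∈ s, H / (n * φ k)) :
    ζ / (d * Δ) * H⁻¹ / L ≤ ∑ k ∈ s, ζ / (n * lam k) * g k := by
  have hterm : ∀ k ∈ s, ζ / (d * L * H) * (H / (n * φ k)) ≤ ζ / (n * lam k) * g k := by
    intro k hk
    have := hlam k hk
    have := hφ k hk
    rw [div_mul_div_comm, div_mul_eq_mul_div, div_le_div_iff₀ (by positivity) (by positivity)]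
    calc ζ * H * (n * lam k) ≤ ζ * H * n * (d * g k * L * φ k) := by
          rw [← mul_assoc]; gcongr; exact hlink k hk
      _ = ζ * g k * (d * L * H * (n * φ k)) := by ring
  calc ζ / (d * Δ) * H⁻¹ / L = ζ / (d * L * H) * Δ⁻¹ := by ring
    _ ≤ ζ / (d * L * H) * ∑ k ∈ s, H / (n * φ k) := by gcongr
    _ = ∑ k ∈ s, ζ / (d * L * H) * (H / (n * φ k)) := Finset.mul_sum _ _ _
    _ ≤ ∑ k ∈ s, ζ / (n * lam k) * g k := Finset.sum_le_sum hterm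

end WeightedSums

theorem lemA4_general
    (p ν d Δ σ ρ : ℝ) (n kstar : ℕ) (κ φi : ℝ → ℝ) (lam : ℤ → ℝ)
    (hνp : ν < p) (hd : 1 ≤ d) (hΔ : 1 ≤ Δ) (hn : 0 < n)
    (hρ : 0 < ρ)
    (hκ : IndexFun κ)
    (hφ : ∀ t ∈ Set.Ioc (0:ℝ) 1, φi t ∈ Set.Ioc (0:ℝ) 1 ∧ κ (φi t) = t)
    (hpos : ∀ k, 0 < lam k)
    (hS : ∀ k : ℤ,
      κ (lam k / (d * γw k ^ ν * max 1 (⨆ j : ℤ, lam j))) ≤ γw k ^ (ν - p) ∧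
      γw k ^ (ν - p) ≤ κ (d * lam k / (γw k ^ ν * max 1 (⨆ j : ℤ, lam j))))
    (hΔ1 : Δ⁻¹ ≤ ∑ k ∈ Finset.Icc (-(kstar:ℤ)) (kstar:ℤ),
        γw (kstar : ℤ) ^ (p - ν) / (n * φi (γw k ^ (ν - p))))
    (hΔ2 : (∑ k ∈ Finset.Icc (-(kstar:ℤ)) (kstar:ℤ),
        γw (kstar : ℤ) ^ (p - ν) / (n * φi (γw k ^ (ν - p)))) ≤ Δ) :
    (∀ k : ℤ,
      (n : ℝ) * (min (2 * σ ^ 2) (ρ / (d * Δ)) / (n * lam k)) * lam k / (2 * σ ^ 2) ≤ 1) ∧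
    (∑ k ∈ Finset.Icc (-(kstar:ℤ)) (kstar:ℤ),
        (min (2 * σ ^ 2) (ρ / (d * Δ)) / (n * lam k)) * γw k ^ p) ≤ ρ ∧
    min (2 * σ ^ 2 / (d * Δ)) (ρ / (d * Δ) ^ 2) *
        κ (φi (γw (kstar : ℤ) ^ (ν - p))) / max 1 (⨆ j : ℤ, lam j) ≤
      ∑ k ∈ Finset.Icc (-(kstar:ℤ)) (kstar:ℤ),
        (min (2 * σ ^ 2) (ρ / (d * Δ)) / (n * lam k)) * γw k ^ ν := by
  have hnR : (0 : ℝ) < n := Nat.cast_pos.2 hn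
  have hdpos : 0 < d := one_pos.trans_le hd
  set L := max 1 (⨆ j : ℤ, lam j)
  have hL : 1 ≤ L := le_max_left _ _
  set ζ := min (2 * σ ^ 2) (ρ / (d * Δ))
  have hζ : 0 ≤ ζ := le_min (by positivity) (by positivity)
  have hlink (k : ℤ) := link_inversion hνp hdpos (one_pos.trans_le hL) hκ.1 hφ (hpos k) (hS k)
  refine ⟨fun k => ?_, ?_, ?_⟩
  · rw [show (n : ℝ) * (ζ / (n * lam k)) * lam k = ζ by field_simp [(hpos k).ne']]
    exact div_le_one_of_le₀ (min_le_left _ _) (by positivity)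
  · have hsplit (k : ℤ) : γw k ^ p = γw k ^ ν * γw k ^ (p - ν) := by
      rw [← rpow_add (γw_pos k), add_sub_cancel]
    simp_rw [hsplit]
    calc _ ≤ ζ * d * Δ := sum_div_mul_mul_le hζ hnR hdpos.le hL (fun k _ => hpos k)
          (fun k _ => (rpow_pos_of_pos (γw_pos k) ν).le) (fun k _ => (hlink k).1)
          (fun k hk => ⟨(rpow_pos_of_pos (γw_pos k) _).le,
            rpow_le_rpow (γw_pos k).le (γw_le_of_mem_Icc hk) (by linarith)⟩)
          (fun k _ => (hlink k).2.1) hΔ2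
      _ ≤ ρ := by
          rw [mul_assoc]
          exact (le_div_iff₀ (by positivity)).1 (min_le_right _ _)
  · have hκδ : κ (φi (γw (kstar : ℤ) ^ (ν - p))) = (γw (kstar : ℤ) ^ (p - ν))⁻¹ := by
      rw [(hφ _ (γw_rpow_mem_Ioc _ (sub_nonpos.2 hνp.le))).2, ← rpow_neg (γw_pos _).le, neg_sub]
    have hmin : min (2 * σ ^ 2 / (d * Δ)) (ρ / (d * Δ) ^ 2) = ζ / (d * Δ) := by
      rw [pow_two (d * Δ), ← div_div ρ, min_div_div_right (by positivity)]
    rw [hκδ, hmin]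
    exact le_sum_div_mul hζ hnR hdpos (one_pos.trans_le hL) (rpow_pos_of_pos (γw_pos _) _)
      (fun k _ => hpos k) (fun k _ => (hlink k).1) (fun k _ => (hlink k).2.2) hΔ1

/-- Deterministic sequence lemma for the lower bound (Lemma A.4),
with `ζ := min{2σ², ρ/(dΔ)}` and `b_k² := ζ/(n·λ_k)`. -/
theorem lemA4
    (p ν d Δ σ ρ : ℝ) (n kstar : ℕ) (κ φi : ℝ → ℝ) (lam : ℤ → ℝ)
    (hν0 : 0 ≤ ν) (hνp : ν < p) (hd : 1 ≤ d) (hΔ : 1 ≤ Δ) (hn : 0 < n)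
    (hσ : 0 < σ) (hρ : 0 < ρ)
    (hκ : IndexFun κ)
    (hφ : ∀ t ∈ Set.Ioc (0:ℝ) 1, φi t ∈ Set.Ioc (0:ℝ) 1 ∧ κ (φi t) = t)
    (hpos : ∀ k, 0 < lam k) (hsum : Summable lam)
    (hS : ∀ k : ℤ,
      κ (lam k / (d * γw k ^ ν * max 1 (⨆ j : ℤ, lam j))) ≤ γw k ^ (ν - p) ∧
      γw k ^ (ν - p) ≤ κ (d * lam k / (γw k ^ ν * max 1 (⨆ j : ℤ, lam j))))
    (hδ1 : φi (γw (kstar : ℤ) ^ (ν - p)) ∈ Set.Ioc (0:ℝ) 1)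
    (hΔ1 : Δ⁻¹ ≤ ∑ k ∈ Finset.Icc (-(kstar:ℤ)) (kstar:ℤ),
        γw (kstar : ℤ) ^ (p - ν) / (n * φi (γw k ^ (ν - p))))
    (hΔ2 : (∑ k ∈ Finset.Icc (-(kstar:ℤ)) (kstar:ℤ),
        γw (kstar : ℤ) ^ (p - ν) / (n * φi (γw k ^ (ν - p)))) ≤ Δ) :
    (∀ k : ℤ,
      (n : ℝ) * (min (2 * σ ^ 2) (ρ / (d * Δ)) / (n * lam k)) * lam k / (2 * σ ^ 2) ≤ 1) ∧
    (∑ k ∈ Finset.Icc (-(kstar:ℤ)) (kstar:ℤ),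
        (min (2 * σ ^ 2) (ρ / (d * Δ)) / (n * lam k)) * γw k ^ p) ≤ ρ ∧
    min (2 * σ ^ 2 / (d * Δ)) (ρ / (d * Δ) ^ 2) *
        κ (φi (γw (kstar : ℤ) ^ (ν - p))) / max 1 (⨆ j : ℤ, lam j) ≤
      ∑ k ∈ Finset.Icc (-(kstar:ℤ)) (kstar:ℤ),
        (min (2 * σ ^ 2) (ρ / (d * Δ)) / (n * lam k)) * γw k ^ ν :=
  lemA4_general p ν d Δ σ ρ n kstar κ φi lam hνp hd hΔ hn hρ hκ hφ hpos hS hΔ1 hΔ2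

end FLIR
end
end

section
/- Asymptotics of the inverse of t·φ(t) in the infinitely smoothing case: Let 0 ≤ ν < p and a > 0, and set φ(s) := exp(−s^{−a/(p−ν)}) for s > 0 (the inverse of the index function κ(t) = |log t|^{−(p−ν)/a}). The map s ↦ s·φ(s) is strictly increasing near 0; let ω denote its inverse function, defined on a right neighborhood of 0. Then ω(t) = |log t|^{−(p−ν)/a}·(1 + o(1)) as t → 0⁺; equivalently, ω(t)·|log t|^{(p−ν)/a} → 1 as t → 0⁺. -/
/-!
Write `g(s) = s·exp(-s^(-b))` with `b = a/(p-ν) > 0`. Since `g` is increasing and positive,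
`ω(t) → 0⁺` as `t → 0⁺`. For `u = ω(t) < 1` one has `|log t| = u^(-b) - log u`, so
`ω(t)·|log t|^(1/b) = (1 - u^b·log u)^(1/b)`, which tends to `1` because `u^b·log u → 0`.
-/

open Filter Set Real
open scoped Topology

namespace FLIR

section

variable {b : ℝ}

lemma strictMonoOn_mul_exp_neg_rpow_neg (hb : 0 < b) :
    StrictMonoOn (fun s : ℝ => s * exp (-(s ^ (-b)))) (Ioi 0) := by
  intro x hx y _ hxy
  have hexp : exp (-(x ^ (-b))) < exp (-(y ^ (-b))) :=
    exp_lt_exp.2 (neg_lt_neg (rpow_lt_rpow_of_neg hx hxy (neg_neg_iff_pos.2 hb)))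
  exact mul_lt_mul'' hxy hexp (le_of_lt hx) (exp_pos _).le

lemma abs_log_mul_exp_neg_rpow_neg {u : ℝ} (hu0 : 0 < u) (hu1 : u ≤ 1) :
    |log (u * exp (-(u ^ (-b))))| = u ^ (-b) - log u := by
  rw [log_mul hu0.ne' (exp_pos _).ne', log_exp, abs_of_nonpos]
  · ring
  · linarith [rpow_pos_of_pos hu0 (-b), log_nonpos hu0.le hu1]

lemma tendsto_mul_rpow_neg_sub_log_rpow_inv (hb : 0 < b) :
    Tendsto (fun u : ℝ => u * (u ^ (-b) - log u) ^ b⁻¹) (𝓝[>] 0) (𝓝 1) := by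
  have hlim : Tendsto (fun u : ℝ => (1 - log u * u ^ b) ^ b⁻¹) (𝓝[>] 0) (𝓝 1) := by
    have := ((tendsto_log_mul_rpow_nhdsGT_zero hb).const_sub 1).rpow_const
      (p := b⁻¹) (Or.inl (by norm_num))
    simpa using this
  refine hlim.congr' ?_
  filter_upwards [Ioo_mem_nhdsGT one_pos] with u ⟨hu0, hu1⟩
  have hfactor : u ^ (-b) - log u = u ^ (-b) * (1 - log u * u ^ b) := by
    rw [mul_sub, mul_one, mul_left_comm, ← rpow_add hu0, neg_add_cancel, rpow_zero, mul_one]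
  have hnonneg : 0 ≤ 1 - log u * u ^ b := by
    nlinarith [log_neg hu0 hu1, rpow_pos_of_pos hu0 b]
  rw [hfactor, mul_rpow (rpow_nonneg hu0.le _) hnonneg, ← rpow_mul hu0.le,
    neg_mul, mul_inv_cancel₀ hb.ne', rpow_neg_one, ← mul_assoc, mul_inv_cancel₀ hu0.ne', one_mul]

variable {ω : ℝ → ℝ}

lemma tendsto_nhdsGT_zero_of_mul_exp_neg_rpow_neg_eq (hb : 0 < b)
    (hω : ∀ᶠ t in 𝓝[>] 0, 0 < ω t ∧ ω t * exp (-(ω t ^ (-b))) = t) :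
    Tendsto ω (𝓝[>] 0) (𝓝[>] 0) := by
  refine tendsto_nhdsWithin_iff.2 ⟨tendsto_order.2 ⟨fun ε hε => ?_, fun ε hε => ?_⟩,
    hω.mono fun t ht => ht.1⟩
  · exact hω.mono fun t ht => hε.trans ht.1
  · have hgε : 0 < ε * exp (-(ε ^ (-b))) := mul_pos hε (exp_pos _)
    filter_upwards [hω, Ioo_mem_nhdsGT hgε] with t ⟨hpos, heq⟩ ⟨_, ht⟩
    by_contra! hle
    have := (strictMonoOn_mul_exp_neg_rpow_neg hb).monotoneOn hε hpos hle
    simp only [heq] at this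
    exact (lt_of_lt_of_le ht this).false

lemma tendsto_mul_abs_log_rpow_inv_of_mul_exp_neg_rpow_neg_eq (hb : 0 < b)
    (hω : ∀ᶠ t in 𝓝[>] 0, 0 < ω t ∧ ω t * exp (-(ω t ^ (-b))) = t) :
    Tendsto (fun t => ω t * |log t| ^ b⁻¹) (𝓝[>] 0) (𝓝 1) := by
  have hω0 := tendsto_nhdsGT_zero_of_mul_exp_neg_rpow_neg_eq hb hω
  refine ((tendsto_mul_rpow_neg_sub_log_rpow_inv hb).comp hω0).congr' ?_
  filter_upwards [hω, hω0 (Ioo_mem_nhdsGT one_pos)] with t ⟨hpos, heq⟩ ⟨_, hlt⟩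
  have habs := abs_log_mul_exp_neg_rpow_neg (b := b) hpos hlt.le
  rw [heq] at habs
  simp only [Function.comp, habs]

end

theorem omega_asymptotics_general
    (a p ν : ℝ) (ha : 0 < a) (hνp : ν < p)
    (ω : ℝ → ℝ)
    (hω : ∃ δ : ℝ, 0 < δ ∧ ∀ t ∈ Set.Ioo (0:ℝ) δ,
      0 < ω t ∧ ω t * Real.exp (-((ω t) ^ (-(a / (p - ν))))) = t) :
    (∃ ε : ℝ, 0 < ε ∧
      StrictMonoOn (fun s : ℝ => s * Real.exp (-(s ^ (-(a / (p - ν)))))) (Set.Ioo 0 ε)) ∧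
    Tendsto (fun t : ℝ => ω t * |Real.log t| ^ ((p - ν) / a))
      (nhdsWithin 0 (Set.Ioi 0)) (nhds 1) := by
  have hb : 0 < a / (p - ν) := div_pos ha (sub_pos.2 hνp)
  obtain ⟨δ, hδ, hωδ⟩ := hω
  refine ⟨⟨1, one_pos, (strictMonoOn_mul_exp_neg_rpow_neg hb).mono fun s hs => hs.1⟩, ?_⟩
  rw [← inv_div]
  exact tendsto_mul_abs_log_rpow_inv_of_mul_exp_neg_rpow_neg_eq hb
    (mem_of_superset (Ioo_mem_nhdsGT hδ) hωδ)

/-- Asymptotics of the inverse `ω` of `s ↦ s·φ(s)` where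
`φ(s) = exp(-s^(-a/(p-ν)))` is the inverse of the index function
`κ(t) = |log t|^(-(p-ν)/a)`: the map `s ↦ s·φ(s)` is strictly increasing near `0`, and
`ω(t)·|log t|^((p-ν)/a) → 1` as `t → 0⁺`, i.e. `ω(t) = |log t|^(-(p-ν)/a)·(1+o(1))`. -/
theorem omega_asymptotics
    (a p ν : ℝ) (ha : 0 < a) (hν0 : 0 ≤ ν) (hνp : ν < p)
    (ω : ℝ → ℝ)
    (hω : ∃ δ : ℝ, 0 < δ ∧ ∀ t ∈ Set.Ioo (0:ℝ) δ,
      0 < ω t ∧ ω t * Real.exp (-((ω t) ^ (-(a / (p - ν))))) = t) :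
    (∃ ε : ℝ, 0 < ε ∧
      StrictMonoOn (fun s : ℝ => s * Real.exp (-(s ^ (-(a / (p - ν)))))) (Set.Ioo 0 ε)) ∧
    Tendsto (fun t : ℝ => ω t * |Real.log t| ^ ((p - ν) / a))
      (nhdsWithin 0 (Set.Ioi 0)) (nhds 1) :=
  omega_asymptotics_general a p ν ha hνp ω hω

end FLIR
end

section
/- Deterministic inequality used in the proof of Lemma A.2 (inequality (A.13)): Let c ∈ ℂ with c ≠ 0, ĉ ∈ ℂ, and w, ŵ > 0. Set λ := |c|²/w and λ̂ := |ĉ|²/ŵ. Then 1 − 2·λ̂/λ ≤ (4·|ĉ/c − 1|² + 1)·( |ŵ/w − 1|²/ŵ + |ŵ/w − 1| ) + 4·|ĉ/c − 1|². -/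
/-!
Write `t = ŵ/w`, `z = ĉ/c`, so that `λ̂/λ = ‖z‖²/t`. The triangle inequality
`1 ≤ ‖z‖ + ‖z - 1‖` gives `1 ≤ 2‖z‖² + 2‖z - 1‖²`. If `t ≤ 1` then
`1 - 2‖z‖²/t ≤ 1 - 2‖z‖² ≤ 2‖z - 1‖²`; if `t ≥ 1` then
`1 - 2‖z‖²/t ≤ (t - 1 + 2‖z - 1‖²)/t ≤ |t - 1| + 2‖z - 1‖²`.
Either bound is dominated by the right-hand side term by term.
-/

noncomputable section

namespace FLIR

theorem norm_sub_sq_le_two_mul {E : Type*} [SeminormedAddGroup E] (a b : E) :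
    ‖a - b‖ ^ 2 ≤ 2 * (‖a‖ ^ 2 + ‖b‖ ^ 2) :=
  (pow_le_pow_left₀ (norm_nonneg _) (norm_sub_le a b) 2).trans add_sq_le

theorem one_le_two_mul_norm_sq_add_norm_sub_one_sq {R : Type*} [SeminormedRing R] [NormOneClass R]
    (z : R) : 1 ≤ 2 * (‖z‖ ^ 2 + ‖z - 1‖ ^ 2) := by
  simpa using norm_sub_sq_le_two_mul z (z - 1)

theorem one_sub_div_le_abs_sub_one_add {x y t : ℝ} (ht : 0 < t) (hx : 0 ≤ x) (hy : 0 ≤ y)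
    (hxy : 1 ≤ x + y) : 1 - x / t ≤ |t - 1| + y := by
  rcases le_total t 1 with ht1 | ht1
  · have : x ≤ x / t := le_div_self hx ht ht1
    linarith [abs_nonneg (t - 1)]
  · calc 1 - x / t ≤ 1 - (1 - y) / t := by gcongr; linarith
      _ = (t - 1 + y) / t := by field_simp; ring
      _ ≤ t - 1 + y := div_le_self (by linarith) ht1
      _ = |t - 1| + y := by rw [abs_of_nonneg (sub_nonneg.mpr ht1)]

theorem deterministic_ineq_A13_general
    (c chat : ℂ) (w what : ℝ)
    (hw : 0 < w) (hwhat : 0 < what) :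
    1 - 2 * ((‖chat‖ ^ 2 / what) / (‖c‖ ^ 2 / w)) ≤
      (4 * ‖chat / c - 1‖ ^ 2 + 1) *
        (|what / w - 1| ^ 2 / what + |what / w - 1|) + 4 * ‖chat / c - 1‖ ^ 2 := by
  set r := ‖chat / c - 1‖
  set s := |what / w - 1|
  have hratio : 2 * ((‖chat‖ ^ 2 / what) / (‖c‖ ^ 2 / w)) = 2 * ‖chat / c‖ ^ 2 / (what / w) := by
    rw [div_div_div_comm, norm_div, div_pow, mul_div_assoc]
  have hmain : 1 - 2 * ‖chat / c‖ ^ 2 / (what / w) ≤ s + 2 * r ^ 2 :=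
    one_sub_div_le_abs_sub_one_add (div_pos hwhat hw) (by positivity) (by positivity)
      (by linarith [one_le_two_mul_norm_sq_add_norm_sub_one_sq (chat / c)])
  have hs : 0 ≤ s ^ 2 / what := by positivity
  rw [hratio]
  nlinarith [sq_nonneg r, abs_nonneg (what / w - 1), mul_nonneg (sq_nonneg r) hs,
    mul_nonneg (sq_nonneg r) (abs_nonneg (what / w - 1))]

/-- Deterministic inequality (A.13) used in the proof of Lemma A.2, with
`λ = |c|²/w` and `λ̂ = |ĉ|²/ŵ`. -/
theorem deterministic_ineq_A13
    (c chat : ℂ) (w what : ℝ)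
    (hc : c ≠ 0) (hw : 0 < w) (hwhat : 0 < what) :
    1 - 2 * ((‖chat‖ ^ 2 / what) / (‖c‖ ^ 2 / w)) ≤
      (4 * ‖chat / c - 1‖ ^ 2 + 1) *
        (|what / w - 1| ^ 2 / what + |what / w - 1|) + 4 * ‖chat / c - 1‖ ^ 2 :=
  deterministic_ineq_A13_general c chat w what hw hwhat

end FLIR
end
end
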